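/- (Inversion of non-commutative power series via plane rooted trees.) Let V be a complex vector space and φ : V → V a non-commutative power series with φ₁ = id_V. Then φ is invertible, the inverse φ⁻¹ satisfies (φ⁻¹)₁ = id_V, and for every n > 1, (φ⁻¹)_n(v₁,…,v_n) = Σ_T (−1)^{|V(T)|}·φ_T(v₁,…,v_n), where the sum is over all plane rooted trees T with n leaves all of whose internal vertices have at least two children (equivalently, valency ≥ 3), and |V(T)| denotes the number of internal vertices of T. -/

import Mathlib

/-- A non-commutative power series `U → V`: a sequence of `n`-multilinear maps `Uⁿ → V`
for `n ≥ 1` (the `n = 0` component is irrelevant). -/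
def NCSeries (U V : Type*) [AddCommGroup U] [Module ℂ U] [AddCommGroup V] [Module ℂ V] :=
  ∀ n : ℕ, MultilinearMap ℂ (fun _ : Fin n => U) V

/-- The `n`-th component of the composition `ψ ∘ φ` of non-commutative power series,
as a function: `(ψ∘φ)_n(u₁,…,u_n) = Σ_{0=i₀<⋯<i_k=n} ψ_k(φ_{i₁-i₀}(u₁,…), …)`. -/
noncomputable def ncComp {U V W : Type*} [AddCommGroup U] [Module ℂ U]
    [AddCommGroup V] [Module ℂ V] [AddCommGroup W] [Module ℂ W]
    (ψ : NCSeries V W) (φ : NCSeries U V) (n : ℕ) (v : Fin n → U) : W :=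
  ∑ c : Composition n,
    ψ c.length (fun j => φ (c.blocksFun j) (v ∘ c.embedding j))

/-- The components of the identity non-commutative power series, as functions:
`(id)₁ = id` and `(id)_n = 0` for `n ≠ 1`. -/
def ncIdFun (V : Type*) [AddCommGroup V] [Module ℂ V] : ∀ n : ℕ, (Fin n → V) → V
  | 1, v => v 0
  | _, _ => 0

/-- `ψ` is a two-sided compositional inverse of `φ`. -/
def NCInverse {U V : Type*} [AddCommGroup U] [Module ℂ U] [AddCommGroup V] [Module ℂ V]
    (φ : NCSeries U V) (ψ : NCSeries V U) : Prop :=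
  (∀ n : ℕ, 1 ≤ n → ∀ v : Fin n → U, ncComp ψ φ n v = ncIdFun U n v) ∧
  (∀ n : ℕ, 1 ≤ n → ∀ v : Fin n → V, ncComp φ ψ n v = ncIdFun V n v)

/-- A plane rooted tree: either a leaf or an internal node with an ordered list of
subtrees. -/
inductive PTree : Type
  | leaf : PTree
  | node : List PTree → PTree

namespace PTree

mutual
/-- The number of leaves of a plane rooted tree. -/
def leaves : PTree → ℕ
  | .leaf => 1
  | .node ts => leavesList ts

/-- The total number of leaves of a list of plane rooted trees. -/
def leavesList : List PTree → ℕ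
  | [] => 0
  | t :: ts => leaves t + leavesList ts
end

mutual
/-- The number of internal vertices of a plane rooted tree. -/
def internalVertices : PTree → ℕ
  | .leaf => 0
  | .node ts => 1 + internalVerticesList ts

/-- The total number of internal vertices of a list of plane rooted trees. -/
def internalVerticesList : List PTree → ℕ
  | [] => 0
  | t :: ts => internalVertices t + internalVerticesList ts
end

/-- A plane rooted tree is good if every internal vertex has at least two children
(valency `≥ 3`). -/
inductive Good : PTree → Prop
  | leaf : Good .leaf
  | node (ts : List PTree) (hlen : 2 ≤ ts.length) (h : ∀ t ∈ ts, Good t) : Good (.node ts)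

end PTree

mutual
/-- `applyTree φ T l` composes the components of the non-commutative power series `φ`
according to the shape of the plane rooted tree `T`, feeding in the entries of the list
`l` at the leaves (in their canonical left-to-right order). -/
noncomputable def applyTree {V : Type*} [AddCommGroup V] [Module ℂ V]
    (φ : NCSeries V V) : PTree → List V → V
  | .leaf, l => (l.head?).getD 0
  | .node ts, l => φ ts.length (fun j => (applyForest φ ts l).getD j 0)

/-- `applyForest φ ts l` applies `applyTree` to each tree in `ts`, splitting the list `l`
into consecutive blocks according to the numbers of leaves of the trees. -/
noncomputable def applyForest {V : Type*} [AddCommGroup V] [Module ℂ V]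
    (φ : NCSeries V V) : List PTree → List V → List V
  | [], _ => []
  | t :: ts, l => applyTree φ t (l.take t.leaves) :: applyForest φ ts (l.drop t.leaves)
end

/-!
Composition of series is associative with unit `id`. If `φ₁ = id`, the equation `φ ∘ ψ = id`
determines `ψ` recursively: `ψ₁ = id` and `ψₙ = -∑ φ_k(ψ_{n₁}, …, ψ_{n_k})`, summed over the
compositions `n = n₁ + ⋯ + n_k` with `k ≥ 2`. Applying the same construction to `ψ` gives a
right inverse of `ψ`, which must equal its left inverse `φ`, so `ψ` is a two-sided inverse, and
any two-sided inverse equals `ψ`. By induction each `ψ_{nᵢ}` is a signed sum over good trees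
with `nᵢ` leaves. Grafting such trees onto a root with `k ≥ 2` children produces every good
tree with `n` leaves exactly once and adds one internal vertex, which gives the extra sign.
-/

namespace Composition

variable {n : ℕ} (c : Composition n)

theorem blocksFun_lt_of_one_lt_length (hc : 1 < c.length) (j : Fin c.length) :
    c.blocksFun j < n := by
  have : Nontrivial (Fin c.length) := Fin.nontrivial_iff_two_le.mpr hc
  obtain ⟨k, hk⟩ := exists_ne j
  calc c.blocksFun j < c.blocksFun j + c.blocksFun k := by
        have := c.one_le_blocksFun k; omega
    _ = ∑ i ∈ {j, k}, c.blocksFun i := (Finset.sum_pair hk.symm).symm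
    _ ≤ ∑ i, c.blocksFun i := Finset.sum_le_sum_of_subset (Finset.subset_univ _)
    _ = n := c.sum_blocksFun

theorem sum_eq_single_add_sum_one_lt_length {M : Type*} [AddCommMonoid M] (hn : 0 < n)
    (f : Composition n → M) :
    ∑ c, f c = f (single n hn) + ∑ c : {c : Composition n // 1 < c.length}, f c := by
  have hmem (c : Composition n) : c ∈ Finset.univ.erase (single n hn) ↔ 1 < c.length := by
    have := c.length_pos_of_pos hn
    simp only [Finset.mem_erase, Finset.mem_univ, and_true, Ne, eq_single_iff_length]
    omega
  rw [← Finset.add_sum_erase _ _ (Finset.mem_univ _), Finset.sum_subtype _ hmem]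

theorem blockwise_update {α β : Type*} (f : ∀ j : Fin c.length, (Fin (c.blocksFun j) → α) → β)
    (v : Fin n → α) (i : Fin n) (z : α) :
    (fun j => f j (Function.update v i z ∘ c.embedding j)) =
      Function.update (fun j => f j (v ∘ c.embedding j)) (c.index i)
        (f (c.index i) (Function.update (v ∘ c.embedding (c.index i)) (c.invEmbedding i) z)) := by
  ext j
  by_cases h : j = c.index i
  · subst h
    rw [Function.update_self, ← Function.update_comp_eq_of_injective _ (c.embedding _).injective,
      c.embedding_comp_inv]
  · rw [Function.update_of_ne h, Function.update_comp_eq_of_notMem_range]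
    rwa [c.mem_range_embedding_iff']

theorem take_drop_sizeUpTo_ofFn {α : Type*} (v : Fin n → α) (j : Fin c.length) :
    ((List.ofFn v).drop (c.sizeUpTo j)).take (c.blocksFun j) = List.ofFn (v ∘ c.embedding j) := by
  have hle : c.sizeUpTo j + c.blocksFun j ≤ n := by
    have := c.sizeUpTo_succ' j
    have := c.sizeUpTo_le (j + 1)
    omega
  refine List.ext_getElem
    (by simp only [List.length_take, List.length_drop, List.length_ofFn]; omega) fun i _ hi => ?_
  rw [List.length_ofFn] at hi
  simp only [List.getElem_take, List.getElem_drop, List.getElem_ofFn]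
  exact congrArg v (Fin.ext (c.coe_embedding j ⟨i, by omega⟩).symm)

end Composition

namespace MultilinearMap

theorem map_zsmul_univ {R ι V W : Type*} [CommRing R] [Fintype ι]
    [AddCommGroup V] [Module R V] [AddCommGroup W] [Module R W]
    (f : MultilinearMap R (fun _ : ι => V) W) (c : ι → ℤ) (x : ι → V) :
    f (fun j => c j • x j) = (∏ j, c j) • f x :=
  (f.restrictScalars ℤ).map_smul_univ c x

section Blocks

variable {R U V W : Type*} [CommSemiring R] [AddCommMonoid U] [Module R U]
  [AddCommMonoid V] [Module R V] [AddCommMonoid W] [Module R W]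

def compBlocks {n : ℕ} {c : Composition n} (g : MultilinearMap R (fun _ : Fin c.length => V) W)
    (f : ∀ j : Fin c.length, MultilinearMap R (fun _ : Fin (c.blocksFun j) => U) V) :
    MultilinearMap R (fun _ : Fin n => U) W where
  toFun v := g fun j => f j (v ∘ c.embedding j)
  map_update_add' v i x y := by
    cases Subsingleton.elim ‹_› (instDecidableEqFin n)
    simp only [c.blockwise_update (fun j => f j), MultilinearMap.map_update_add]
  map_update_smul' v i r x := by
    cases Subsingleton.elim ‹_› (instDecidableEqFin n)
    simp only [c.blockwise_update (fun j => f j), MultilinearMap.map_update_smul]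

@[simp]
theorem compBlocks_apply {n : ℕ} {c : Composition n}
    (g : MultilinearMap R (fun _ : Fin c.length => V) W)
    (f : ∀ j : Fin c.length, MultilinearMap R (fun _ : Fin (c.blocksFun j) => U) V)
    (v : Fin n → U) : g.compBlocks f v = g fun j => f j (v ∘ c.embedding j) :=
  rfl

end Blocks

end MultilinearMap

namespace NCSeries

variable {U V W X : Type*} [AddCommGroup U] [Module ℂ U] [AddCommGroup V] [Module ℂ V]
  [AddCommGroup W] [Module ℂ W] [AddCommGroup X] [Module ℂ X]

theorem congr (φ : NCSeries U V) {m n : ℕ} (h : m = n) {v : Fin m → U} {w : Fin n → U}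
    (hvw : ∀ i (him : i < m) (hin : i < n), v ⟨i, him⟩ = w ⟨i, hin⟩) : φ m v = φ n w := by
  subst h
  exact congrArg _ (funext fun i => hvw i.1 i.2 i.2)

noncomputable def comp (ψ : NCSeries V W) (φ : NCSeries U V) : NCSeries U W := fun n =>
  ∑ c : Composition n, (ψ c.length).compBlocks fun j => φ (c.blocksFun j)

theorem comp_apply (ψ : NCSeries V W) (φ : NCSeries U V) (n : ℕ) (v : Fin n → U) :
    ψ.comp φ n v = ncComp ψ φ n v := by
  simp only [comp, ncComp, sum_apply, MultilinearMap.compBlocks_apply]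

noncomputable def id : NCSeries V V
  | 1 => MultilinearMap.ofSubsingleton ℂ V V 0 LinearMap.id
  | _ => 0

theorem id_apply : ∀ (n : ℕ) (v : Fin n → V), (id : NCSeries V V) n v = ncIdFun V n v
  | 0, _ => rfl
  | 1, _ => rfl
  | _ + 2, _ => rfl

theorem id_apply_of_eq_one {n : ℕ} (h : n = 1) (v : Fin n → V) :
    (id : NCSeries V V) n v = v ⟨0, by omega⟩ := by
  subst h
  rfl

theorem id_apply_of_ne_one {n : ℕ} (h : n ≠ 1) (v : Fin n → V) : (id : NCSeries V V) n v = 0 := by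
  match n, h with
  | 0, _ => rfl
  | _ + 2, _ => rfl

theorem ncComp_congr_left {ψ ψ' : NCSeries V W} (φ : NCSeries U V)
    (h : ∀ k, 0 < k → ∀ w : Fin k → V, ψ k w = ψ' k w) {n : ℕ} (hn : 0 < n) (v : Fin n → U) :
    ncComp ψ φ n v = ncComp ψ' φ n v :=
  Finset.sum_congr rfl fun c _ => h _ (c.length_pos_of_pos hn) _

theorem ncComp_congr_right (ψ : NCSeries V W) {φ φ' : NCSeries U V}
    (h : ∀ k, 0 < k → ∀ w : Fin k → U, φ k w = φ' k w) (n : ℕ) (v : Fin n → U) :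
    ncComp ψ φ n v = ncComp ψ φ' n v :=
  Finset.sum_congr rfl fun c _ => congrArg _ (funext fun j => h _ (c.one_le_blocksFun j) _)

theorem ncComp_id (ψ : NCSeries V W) (n : ℕ) (v : Fin n → V) : ncComp ψ id n v = ψ n v := by
  rw [ncComp, Finset.sum_eq_single (Composition.ones n)]
  · refine ψ.congr (Composition.ones_length n) fun i hi _ => ?_
    rw [id_apply_of_eq_one (Composition.ones_blocksFun _ _)]
    exact congrArg v (Composition.ones_embedding _ _)
  · intro c _ hc
    obtain ⟨k, hk, hk1⟩ := Composition.ne_ones_iff.1 hc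
    obtain ⟨j, rfl⟩ := List.get_of_mem hk
    refine MultilinearMap.map_coord_zero _ (Fin.cast c.blocks_length j) ?_
    exact id_apply_of_ne_one hk1.ne' _
  · simp

theorem id_ncComp (φ : NCSeries U V) {n : ℕ} (hn : 0 < n) (v : Fin n → U) :
    ncComp id φ n v = φ n v := by
  rw [ncComp, Finset.sum_eq_single (Composition.single n hn)]
  · rw [id_apply_of_eq_one (Composition.single_length hn)]
    refine φ.congr (Composition.single_blocksFun hn _) fun i _ hi => congrArg v ?_
    exact Composition.single_embedding hn ⟨i, hi⟩
  · intro c _ hc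
    refine id_apply_of_ne_one (fun h => hc ?_) _
    exact (Composition.eq_single_iff_length hn).2 h
  · simp

theorem ncComp_assoc (θ : NCSeries W X) (ψ : NCSeries V W) (φ : NCSeries U V) (n : ℕ)
    (v : Fin n → U) : ncComp (θ.comp ψ) φ n v = ncComp θ (ψ.comp φ) n v := by
  let f : (Σ a : Composition n, Composition a.length) → X := fun p =>
    θ p.2.length fun i => ψ (p.2.blocksFun i)
      ((fun j => φ (p.1.blocksFun j) (v ∘ p.1.embedding j)) ∘ p.2.embedding i)
  let g : (Σ c : Composition n, ∀ i : Fin c.length, Composition (c.blocksFun i)) → X := fun p =>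
    θ p.1.length fun i => ψ (p.2 i).length fun j =>
      φ ((p.2 i).blocksFun j) ((v ∘ p.1.embedding i) ∘ (p.2 i).embedding j)
  have hf : ncComp (θ.comp ψ) φ n v = ∑ p, f p := by
    simp only [ncComp, comp_apply]
    rw [Finset.sum_sigma', Finset.univ_sigma_univ]
  have hg : ncComp θ (ψ.comp φ) n v = ∑ p, g p := by
    simp only [ncComp, comp_apply, MultilinearMap.map_sum]
    rw [Finset.sum_sigma', Finset.univ_sigma_univ]
  rw [hf, hg, ← (Composition.sigmaEquivSigmaPi n).sum_comp g]
  refine Finset.sum_congr rfl fun ⟨a, b⟩ _ => ?_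
  dsimp only [f, g, Composition.sigmaEquivSigmaPi, Equiv.coe_fn_mk]
  refine θ.congr (Composition.length_gather a b).symm fun i hi1 hi2 => ?_
  refine ψ.congr (Composition.length_sigmaCompositionAux a b _).symm fun j hj1 hj2 => ?_
  refine φ.congr (Composition.blocksFun_sigmaCompositionAux a b _ _).symm fun k hk1 hk2 => ?_
  refine congrArg v (Fin.ext ?_)
  simp only [Composition.coe_embedding]
  rw [Composition.sizeUpTo_sizeUpTo_add _ _ hi1 hj1, add_assoc]

theorem left_inv_eq_right_inv {ψ χ : NCSeries V U} {φ : NCSeries U V}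
    (hψ : ∀ n, 1 ≤ n → ∀ v : Fin n → U, ncComp ψ φ n v = ncIdFun U n v)
    (hχ : ∀ n, 1 ≤ n → ∀ v : Fin n → V, ncComp φ χ n v = ncIdFun V n v)
    {n : ℕ} (hn : 1 ≤ n) (v : Fin n → V) : ψ n v = χ n v :=
  calc ψ n v = ncComp ψ id n v := (ncComp_id ψ n v).symm
    _ = ncComp ψ (φ.comp χ) n v :=
        ncComp_congr_right ψ (fun k hk w => by rw [comp_apply, hχ k hk, id_apply]) n v
    _ = ncComp (ψ.comp φ) χ n v := (ncComp_assoc ψ φ χ n v).symm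
    _ = ncComp id χ n v :=
        ncComp_congr_left χ (fun k hk w => by rw [comp_apply, hψ k hk, id_apply]) hn v
    _ = χ n v := id_ncComp χ hn v

/-- In `(φ ∘ ψ)ₙ` the composition `single n` contributes `φ₁(ψₙ) = ψₙ`; all other compositions
involve only `ψₖ` with `k < n`. -/
noncomputable def rightInv (φ : NCSeries V V) : NCSeries V V
  | 0 => 0
  | 1 => MultilinearMap.ofSubsingleton ℂ V V 0 LinearMap.id
  | n + 2 => -∑ c : {c : Composition (n + 2) // 1 < c.length},
      (φ c.1.length).compBlocks fun j => rightInv φ (c.1.blocksFun j)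
termination_by n => n
decreasing_by exact c.1.blocksFun_lt_of_one_lt_length c.2 j

theorem rightInv_one_apply (φ : NCSeries V V) (v : Fin 1 → V) : φ.rightInv 1 v = v 0 := by
  rw [rightInv]
  rfl

theorem rightInv_add_two (φ : NCSeries V V) (n : ℕ) :
    φ.rightInv (n + 2) = -∑ c : {c : Composition (n + 2) // 1 < c.length},
      (φ c.1.length).compBlocks fun j => φ.rightInv (c.1.blocksFun j) := by
  rw [rightInv]

theorem ncComp_rightInv (φ : NCSeries V V) (hφ1 : ∀ v : Fin 1 → V, φ 1 v = v 0)
    {n : ℕ} (hn : 1 ≤ n) (v : Fin n → V) : ncComp φ φ.rightInv n v = ncIdFun V n v := by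
  have hsingle : φ (Composition.single n hn).length
      (fun j => φ.rightInv ((Composition.single n hn).blocksFun j)
        (v ∘ (Composition.single n hn).embedding j)) = φ.rightInv n v := by
    rw [← hφ1 fun _ => φ.rightInv n v]
    refine φ.congr (Composition.single_length hn) fun i hi _ => ?_
    obtain rfl : i = 0 := by simpa using hi
    refine φ.rightInv.congr (Composition.single_blocksFun hn _) fun k _ hk => ?_
    exact congrArg v (Composition.single_embedding hn ⟨k, hk⟩)
  rw [ncComp, Composition.sum_eq_single_add_sum_one_lt_length hn, hsingle]
  match n, v with
  | 1, v =>
    have : IsEmpty {c : Composition 1 // 1 < c.length} := ⟨fun c => by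
      have := c.1.length_le; omega⟩
    rw [Finset.univ_eq_empty, Finset.sum_empty, add_zero, rightInv_one_apply]
    rfl
  | n + 2, v =>
    simp only [rightInv_add_two, neg_apply, sum_apply, MultilinearMap.compBlocks_apply,
      neg_add_cancel]
    rfl

theorem ncInverse_rightInv (φ : NCSeries V V) (hφ1 : ∀ v : Fin 1 → V, φ 1 v = v 0) :
    NCInverse φ φ.rightInv := by
  refine ⟨fun n hn v => ?_, fun _ => ncComp_rightInv φ hφ1⟩
  -- `φ` is a left inverse of `φ.rightInv`, hence equal to its right inverse.
  have hφ : ∀ k, 0 < k → ∀ w, φ k w = φ.rightInv.rightInv k w := fun k hk w =>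
    left_inv_eq_right_inv (fun _ => ncComp_rightInv φ hφ1)
      (fun _ => ncComp_rightInv _ (rightInv_one_apply φ)) hk w
  rw [ncComp_congr_right _ hφ, ncComp_rightInv _ (rightInv_one_apply φ) hn]

theorem eq_rightInv_of_ncInverse {φ ψ : NCSeries V V} (hφ1 : ∀ v : Fin 1 → V, φ 1 v = v 0)
    (h : NCInverse φ ψ) {n : ℕ} (hn : 1 ≤ n) (v : Fin n → V) : ψ n v = φ.rightInv n v :=
  left_inv_eq_right_inv h.1 (fun _ => ncComp_rightInv φ hφ1) hn v

end NCSeries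

namespace PTree

theorem leavesList_eq_sum : ∀ ts : List PTree, leavesList ts = (ts.map leaves).sum
  | [] => rfl
  | t :: ts => by rw [leavesList, List.map_cons, List.sum_cons, leavesList_eq_sum ts]

theorem internalVerticesList_eq_sum :
    ∀ ts : List PTree, internalVerticesList ts = (ts.map internalVertices).sum
  | [] => rfl
  | t :: ts => by
    rw [internalVerticesList, List.map_cons, List.sum_cons, internalVerticesList_eq_sum ts]

theorem leaves_node_ofFn {k : ℕ} (r : Fin k → PTree) :
    (node (List.ofFn r)).leaves = ∑ j, (r j).leaves := by
  rw [leaves, leavesList_eq_sum, List.map_ofFn, List.sum_ofFn]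
  rfl

theorem internalVertices_node_ofFn {k : ℕ} (r : Fin k → PTree) :
    (node (List.ofFn r)).internalVertices = 1 + ∑ j, (r j).internalVertices := by
  rw [internalVertices, internalVerticesList_eq_sum, List.map_ofFn, List.sum_ofFn]
  rfl

theorem Good.leaves_pos {T : PTree} (hT : T.Good) : 0 < T.leaves := by
  induction hT with
  | leaf => exact Nat.one_pos
  | node ts hlen _ ih =>
    obtain ⟨t, ht⟩ := List.exists_mem_of_length_pos (by omega : 0 < ts.length)
    rw [leaves, leavesList_eq_sum]
    exact (ih t ht).trans_le (List.le_sum_of_mem (List.mem_map_of_mem ht))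

theorem blocks_eq_map_leaves {n : ℕ} {c : Composition n} {r : Fin c.length → PTree}
    (hr : ∀ j, (r j).leaves = c.blocksFun j) : c.blocks = (List.ofFn r).map leaves := by
  rw [List.map_ofFn, ← c.ofFn_blocksFun]
  exact congrArg _ (funext fun j => (hr j).symm)

theorem good_node_ofFn {n : ℕ} {c : Composition n} (hc : 1 < c.length) {r : Fin c.length → PTree}
    (hr : ∀ j, (r j).Good ∧ (r j).leaves = c.blocksFun j) :
    (node (List.ofFn r)).Good ∧ (node (List.ofFn r)).leaves = n := by
  refine ⟨.node _ (by rwa [List.length_ofFn]) fun t ht => ?_, ?_⟩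
  · obtain ⟨j, rfl⟩ := List.mem_ofFn.1 ht
    exact (hr j).1
  · rw [leaves_node_ofFn]
    exact (Finset.sum_congr rfl fun j _ => (hr j).2).trans c.sum_blocksFun

theorem Good.exists_eq_node_ofFn {n : ℕ} {T : PTree} (hT : T.Good) (hn : T.leaves = n)
    (hleaf : T ≠ .leaf) :
    ∃ c : {c : Composition n // 1 < c.length}, ∃ r : Fin c.1.length → PTree,
      (∀ j, (r j).Good ∧ (r j).leaves = c.1.blocksFun j) ∧ T = .node (List.ofFn r) := by
  subst hn
  cases hT with
  | leaf => exact absurd rfl hleaf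
  | node ts hlen hts =>
    let c : Composition (PTree.node ts).leaves :=
      ⟨ts.map leaves, fun {i} hi => by
        obtain ⟨t, ht, rfl⟩ := List.mem_map.1 hi
        exact (hts t ht).leaves_pos, (leavesList_eq_sum ts).symm⟩
    have hclen : c.length = ts.length := List.length_map _
    refine ⟨⟨c, by omega⟩, fun j => ts[j.1]'(j.2.trans_eq hclen),
      fun j => ⟨hts _ (List.getElem_mem _), (List.getElem_map _).symm⟩, ?_⟩
    refine congrArg PTree.node (List.ext_getElem (by simp [hclen]) fun i _ _ => ?_)
    rw [List.getElem_ofFn]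

theorem finite_setOf_good_leaves_eq (n : ℕ) : {T : PTree | T.Good ∧ T.leaves = n}.Finite := by
  induction n using Nat.strong_induction_on with
  | _ n ih =>
  have hnodes : ∀ c : {c : Composition n // 1 < c.length},
      ((fun r => node (List.ofFn r)) ''
        Set.univ.pi fun j => {T : PTree | T.Good ∧ T.leaves = c.1.blocksFun j}).Finite :=
    fun c => (Set.Finite.pi fun j => ih _ (c.1.blocksFun_lt_of_one_lt_length c.2 j)).image _
  refine ((Set.finite_singleton leaf).union (Set.finite_iUnion hnodes)).subset ?_
  rintro T ⟨hT, hn⟩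
  by_cases hleaf : T = leaf
  · exact Or.inl hleaf
  · obtain ⟨c, r, hr, rfl⟩ := hT.exists_eq_node_ofFn hn hleaf
    exact Or.inr (Set.mem_iUnion.2 ⟨c, r, fun j _ => hr j, rfl⟩)

noncomputable def goodTrees (n : ℕ) : Finset PTree := (finite_setOf_good_leaves_eq n).toFinset

theorem mem_goodTrees {n : ℕ} {T : PTree} : T ∈ goodTrees n ↔ T.Good ∧ T.leaves = n :=
  Set.Finite.mem_toFinset _

theorem goodTrees_one : goodTrees 1 = {leaf} := by
  ext T
  rw [mem_goodTrees, Finset.mem_singleton]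
  refine ⟨fun ⟨hT, h1⟩ => by_contra fun hleaf => ?_, fun h => h ▸ ⟨.leaf, rfl⟩⟩
  obtain ⟨⟨c, hc⟩, -⟩ := hT.exists_eq_node_ofFn h1 hleaf
  have := c.length_le
  omega

theorem sum_goodTrees_eq_sum_node {M : Type*} [AddCommMonoid M] {n : ℕ} (hn : 2 ≤ n)
    (F : PTree → M) :
    ∑ T ∈ goodTrees n, F T = ∑ c : {c : Composition n // 1 < c.length},
      ∑ r ∈ Fintype.piFinset fun j => goodTrees (c.1.blocksFun j), F (node (List.ofFn r)) := by
  have mem_sigma {p : Σ c : {c : Composition n // 1 < c.length}, Fin c.1.length → PTree} :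
      p ∈ Finset.univ.sigma (fun c => Fintype.piFinset fun j => goodTrees (c.1.blocksFun j)) ↔
        ∀ j, (p.2 j).Good ∧ (p.2 j).leaves = p.1.1.blocksFun j := by
    simp only [Finset.mem_sigma, Finset.mem_univ, true_and, Fintype.mem_piFinset, mem_goodTrees]
  rw [Finset.sum_sigma']
  refine (Finset.sum_bij (fun p _ => node (List.ofFn p.2)) ?_ ?_ ?_ fun _ _ => rfl).symm
  · exact fun p hp => mem_goodTrees.2 (good_node_ofFn p.1.2 (mem_sigma.1 hp))
  · rintro ⟨⟨c, hc⟩, r⟩ hp ⟨⟨c', hc'⟩, r'⟩ hp' h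
    have hrr' := PTree.node.inj h
    obtain rfl : c = c' := Composition.ext <| by
      rw [blocks_eq_map_leaves fun j => (mem_sigma.1 hp j).2,
        blocks_eq_map_leaves fun j => (mem_sigma.1 hp' j).2, hrr']
    obtain rfl := List.ofFn_inj.1 hrr'
    rfl
  · intro T hT
    obtain ⟨hT, hn⟩ := mem_goodTrees.1 hT
    have hleaf : T ≠ leaf := by rintro rfl; simp only [leaves] at hn; omega
    obtain ⟨c, r, hr, rfl⟩ := hT.exists_eq_node_ofFn hn hleaf
    exact ⟨⟨c, r⟩, mem_sigma.2 hr, rfl⟩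

end PTree

section ApplyTree

variable {V : Type*} [AddCommGroup V] [Module ℂ V] (φ : NCSeries V V)

theorem applyTree_leaf_ofFn (v : Fin 1 → V) : applyTree φ .leaf (List.ofFn v) = v 0 := by
  simp [applyTree]

theorem applyForest_getD :
    ∀ (ts : List PTree) (l : List V) (j : ℕ) (hj : j < ts.length),
      (applyForest φ ts l).getD j 0 =
        applyTree φ ts[j] ((l.drop (PTree.leavesList (ts.take j))).take ts[j].leaves)
  | [], _, _, hj => absurd hj (Nat.not_lt_zero _)
  | t :: ts, l, 0, _ => by simp [applyForest, PTree.leavesList]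
  | t :: ts, l, j + 1, hj => by
    rw [applyForest, List.getD_cons_succ, applyForest_getD ts _ j (by simpa using hj),
      List.drop_drop, List.take_succ_cons, PTree.leavesList]
    rfl

theorem applyTree_node_ofFn {n : ℕ} (c : Composition n) {r : Fin c.length → PTree}
    (hr : ∀ j, (r j).leaves = c.blocksFun j) (v : Fin n → V) :
    applyTree φ (.node (List.ofFn r)) (List.ofFn v) =
      φ c.length fun j => applyTree φ (r j) (List.ofFn (v ∘ c.embedding j)) := by
  rw [applyTree]
  refine φ.congr (List.length_ofFn (f := r)) fun i hi1 hi2 => ?_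
  have hsizeUpTo : PTree.leavesList ((List.ofFn r).take i) = c.sizeUpTo i := by
    rw [PTree.leavesList_eq_sum, List.map_take, ← PTree.blocks_eq_map_leaves hr]
    rfl
  rw [applyForest_getD φ _ _ i hi1, List.getElem_ofFn, hsizeUpTo, hr]
  exact congrArg _ (c.take_drop_sizeUpTo_ofFn v ⟨i, hi2⟩)

end ApplyTree

namespace NCSeries

variable {V : Type*} [AddCommGroup V] [Module ℂ V]

theorem rightInv_apply_eq_sum_goodTrees (φ : NCSeries V V) {n : ℕ} (hn : 1 ≤ n)
    (v : Fin n → V) :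
    φ.rightInv n v = ∑ T ∈ PTree.goodTrees n,
      ((-1 : ℤ) ^ T.internalVertices) • applyTree φ T (List.ofFn v) := by
  induction n using Nat.strong_induction_on with
  | _ n ih =>
  match n, hn, v with
  | 1, _, v =>
    rw [PTree.goodTrees_one, Finset.sum_singleton, rightInv_one_apply, applyTree_leaf_ofFn]
    simp [PTree.internalVertices]
  | m + 2, _, v =>
    have hnode (c : {c : Composition (m + 2) // 1 < c.length}) (r : Fin c.1.length → PTree)
        (hr : r ∈ Fintype.piFinset fun j => PTree.goodTrees (c.1.blocksFun j)) :
        -φ c.1.length (fun j => (-1 : ℤ) ^ (r j).internalVertices •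
            applyTree φ (r j) (List.ofFn (v ∘ c.1.embedding j))) =
          (-1 : ℤ) ^ (PTree.node (List.ofFn r)).internalVertices •
            applyTree φ (.node (List.ofFn r)) (List.ofFn v) := by
      have hleaves j := (PTree.mem_goodTrees.1 (Fintype.mem_piFinset.1 hr j)).2
      rw [MultilinearMap.map_zsmul_univ, Finset.prod_pow_eq_pow_sum,
        applyTree_node_ofFn φ c.1 hleaves, PTree.internalVertices_node_ofFn, pow_add, pow_one,
        neg_one_mul, neg_smul]
    calc φ.rightInv (m + 2) v
        = -∑ c : {c : Composition (m + 2) // 1 < c.length}, φ c.1.length fun j =>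
            φ.rightInv (c.1.blocksFun j) (v ∘ c.1.embedding j) := by
          simp only [rightInv_add_two, neg_apply, sum_apply, MultilinearMap.compBlocks_apply]
      _ = -∑ c : {c : Composition (m + 2) // 1 < c.length}, φ c.1.length fun j =>
            ∑ T ∈ PTree.goodTrees (c.1.blocksFun j), (-1 : ℤ) ^ T.internalVertices •
              applyTree φ T (List.ofFn (v ∘ c.1.embedding j)) := by
          refine congrArg _ (Finset.sum_congr rfl fun c _ => congrArg _ (funext fun j => ?_))
          exact ih _ (c.1.blocksFun_lt_of_one_lt_length c.2 j) (c.1.one_le_blocksFun j) _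
      _ = ∑ c : {c : Composition (m + 2) // 1 < c.length},
            ∑ r ∈ Fintype.piFinset fun j => PTree.goodTrees (c.1.blocksFun j),
              (-1 : ℤ) ^ (PTree.node (List.ofFn r)).internalVertices •
                applyTree φ (.node (List.ofFn r)) (List.ofFn v) := by
          simp only [MultilinearMap.map_sum_finset, ← Finset.sum_neg_distrib]
          exact Finset.sum_congr rfl fun c _ => Finset.sum_congr rfl (hnode c)
      _ = _ := (PTree.sum_goodTrees_eq_sum_node (by omega)
          fun T => (-1 : ℤ) ^ T.internalVertices • applyTree φ T (List.ofFn v)).symm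

end NCSeries

/-- a non-commutative power series `φ : V → V` with `φ₁ = id` is invertible;
its inverse satisfies `(φ⁻¹)₁ = id` and, for `n > 1`,
`(φ⁻¹)_n(v₁,…,v_n) = Σ_T (-1)^{|V(T)|} φ_T(v₁,…,v_n)`, summing over the plane rooted
trees `T` with `n` leaves all of whose internal vertices have at least two children. -/
theorem stmt19 {V : Type*} [AddCommGroup V] [Module ℂ V] (φ : NCSeries V V)
    (hφ1 : ∀ v : Fin 1 → V, φ 1 v = v 0) :
    (∃ ψ : NCSeries V V, NCInverse φ ψ) ∧
    ∀ ψ : NCSeries V V, NCInverse φ ψ →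
      (∀ v : Fin 1 → V, ψ 1 v = v 0) ∧
      ∀ n : ℕ, 1 < n → ∀ v : Fin n → V,
        ψ n v = ∑ᶠ T ∈ {T : PTree | PTree.Good T ∧ T.leaves = n},
          ((-1 : ℤ) ^ T.internalVertices) • applyTree φ T (List.ofFn v) := by
  refine ⟨⟨φ.rightInv, φ.ncInverse_rightInv hφ1⟩, fun ψ hψ => ⟨fun v => ?_, fun n hn v => ?_⟩⟩
  · rw [NCSeries.eq_rightInv_of_ncInverse hφ1 hψ le_rfl, NCSeries.rightInv_one_apply]
  · rw [NCSeries.eq_rightInv_of_ncInverse hφ1 hψ hn.le,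
      NCSeries.rightInv_apply_eq_sum_goodTrees φ hn.le,
      finsum_mem_eq_finite_toFinset_sum _ (PTree.finite_setOf_good_leaves_eq n)]
    rfl
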